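/- Let A and B be positive semidefinite p×p real symmetric matrices, λ > 0, and w ∈ ℝ^p. Then ‖(λI + B)⁻²(2λI + B) B w − (λI + A)⁻²(2λI + A) A w‖ ≤ (4‖w‖/λ) ‖B − A‖, where ‖·‖ denotes the operator norm for matrices and the Euclidean norm for vectors. -/

import Mathlib

/-! With `R_M = (λ + M)⁻¹`, the identity `(2λ + M) M = (λ + M)² - λ²` gives
`R_M² (2λ + M) M = 1 - λ² R_M²`, so the difference of the two sides is `λ² (R_A² - R_B²)`.
Coercivity `⟪x, (λ + M) x⟫ ≥ λ ‖x‖²` gives `‖R_M‖ ≤ 1/λ`, and the resolvent identity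
`R_A - R_B = R_A (B - A) R_B` then bounds `‖R_A² - R_B²‖` by `2 ‖B - A‖ / λ³`. -/

open scoped Matrix.Norms.L2Operator

open scoped RealInnerProductSpace

theorem norm_sq_sub_sq_le {R : Type*} [NormedRing R] {x y : R} {r : ℝ}
    (hx : ‖x‖ ≤ r) (hy : ‖y‖ ≤ r) : ‖x ^ 2 - y ^ 2‖ ≤ 2 * r * ‖x - y‖ := by
  have hsplit : x ^ 2 - y ^ 2 = x * (x - y) + (x - y) * y := by noncomm_ring
  calc ‖x ^ 2 - y ^ 2‖ ≤ ‖x‖ * ‖x - y‖ + ‖x - y‖ * ‖y‖ := by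
        rw [hsplit]
        exact (norm_add_le _ _).trans (add_le_add (norm_mul_le _ _) (norm_mul_le _ _))
    _ ≤ r * ‖x - y‖ + ‖x - y‖ * r := by gcongr
    _ = 2 * r * ‖x - y‖ := by ring

theorem mul_norm_le_norm_apply_of_coercive {E : Type*} [NormedAddCommGroup E]
    [InnerProductSpace ℝ E] {T : E →L[ℝ] E} {c : ℝ} (hT : ∀ x, c * ‖x‖ ^ 2 ≤ ⟪x, T x⟫) (x : E) :
    c * ‖x‖ ≤ ‖T x‖ := by
  rcases (norm_nonneg x).eq_or_lt with hx | hx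
  · simp [← hx]
  · refine le_of_mul_le_mul_left ?_ hx
    calc ‖x‖ * (c * ‖x‖) = c * ‖x‖ ^ 2 := by ring
      _ ≤ ⟪x, T x⟫ := hT x
      _ ≤ ‖x‖ * ‖T x‖ := real_inner_le_norm x (T x)

namespace Matrix

variable {n : Type*} [DecidableEq n]

theorem PosSemidef.posDef_smul_one_add {M : Matrix n n ℝ} {c : ℝ} (hM : M.PosSemidef)
    (hc : 0 < c) : (c • 1 + M).PosDef :=
  (PosDef.one.smul hc).add_posSemidef hM

variable [Fintype n]

theorem sq_inv_mul_two_smul_add_mul {K : Type*} [Field K] {M : Matrix n n K} {c : K}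
    (h : IsUnit (c • 1 + M).det) :
    ((c • 1 + M)⁻¹) ^ 2 * ((2 * c) • 1 + M) * M = 1 - c ^ 2 • ((c • 1 + M)⁻¹) ^ 2 := by
  set N := c • (1 : Matrix n n K) + M
  have hsq : ((2 * c) • 1 + M) * M = N ^ 2 - c ^ 2 • 1 := by
    simp only [N, pow_two, add_mul, mul_add, Matrix.smul_mul, Matrix.mul_smul, Matrix.one_mul,
      Matrix.mul_one, smul_smul]
    module
  have hcomm : Commute N⁻¹ N := (nonsing_inv_mul _ h).trans (mul_nonsing_inv _ h).symm
  rw [mul_assoc, hsq, mul_sub, Matrix.mul_smul, mul_one, ← hcomm.mul_pow, nonsing_inv_mul _ h,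
    one_pow]

namespace PosSemidef

variable {M : Matrix n n ℝ} {c : ℝ}

theorem mul_norm_sq_le_inner_smul_one_add (hM : M.PosSemidef) (x : EuclideanSpace ℝ n) :
    c * ‖x‖ ^ 2 ≤ ⟪x, toEuclideanCLM (𝕜 := ℝ) (c • 1 + M) x⟫ := by
  rw [map_add, map_smul, map_one, _root_.add_apply, _root_.smul_apply,
    one_apply_eq_self, inner_add_right, real_inner_smul_right,
    real_inner_self_eq_norm_sq, inner_toEuclideanCLM]
  have hMx := hM.dotProduct_mulVec_nonneg (WithLp.ofLp x)
  simp only [star_trivial] at hMx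
  linarith

theorem norm_inv_smul_one_add_le (hM : M.PosSemidef) (hc : 0 < c) :
    ‖(c • 1 + M)⁻¹‖ ≤ c⁻¹ := by
  have hN := (hM.posDef_smul_one_add hc).det_pos.ne'.isUnit
  rw [cstar_norm_def]
  refine ContinuousLinearMap.opNorm_le_bound _ (by positivity) fun v => ?_
  have hcoer := mul_norm_le_norm_apply_of_coercive (hM.mul_norm_sq_le_inner_smul_one_add (c := c))
    (toEuclideanCLM (𝕜 := ℝ) (c • 1 + M)⁻¹ v)
  rw [← mul_apply_eq_comp, ← map_mul, mul_nonsing_inv _ hN, map_one, one_apply_eq_self] at hcoer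
  rw [inv_mul_eq_div, le_div_iff₀' hc]
  exact hcoer

theorem norm_sq_inv_mul_two_smul_add_mul_sub_le {A B : Matrix n n ℝ} (hA : A.PosSemidef)
    (hB : B.PosSemidef) (hc : 0 < c) :
    ‖((c • 1 + B)⁻¹) ^ 2 * ((2 * c) • 1 + B) * B - ((c • 1 + A)⁻¹) ^ 2 * ((2 * c) • 1 + A) * A‖
      ≤ 2 / c * ‖B - A‖ := by
  have hAu := (hA.posDef_smul_one_add hc).det_pos.ne'.isUnit
  have hBu := (hB.posDef_smul_one_add hc).det_pos.ne'.isUnit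
  have hRA := hA.norm_inv_smul_one_add_le hc
  have hRB := hB.norm_inv_smul_one_add_le hc
  have hres : ‖(c • 1 + A)⁻¹ - (c • 1 + B)⁻¹‖ ≤ c⁻¹ * ‖B - A‖ * c⁻¹ := by
    rw [inv_sub_inv (by simp only [isUnit_iff_isUnit_det, hAu, hBu]), add_sub_add_left_eq_sub]
    refine (l2_opNorm_mul _ _).trans (mul_le_mul ((l2_opNorm_mul _ _).trans ?_) hRB
      (norm_nonneg _) (by positivity))
    gcongr
  rw [sq_inv_mul_two_smul_add_mul hBu, sq_inv_mul_two_smul_add_mul hAu, sub_sub_sub_cancel_left,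
    ← smul_sub, norm_smul, Real.norm_of_nonneg (sq_nonneg c)]
  calc c ^ 2 * ‖((c • 1 + A)⁻¹) ^ 2 - ((c • 1 + B)⁻¹) ^ 2‖
      ≤ c ^ 2 * (2 * c⁻¹ * (c⁻¹ * ‖B - A‖ * c⁻¹)) := by
        gcongr
        exact (norm_sq_sub_sq_le hRA hRB).trans (by gcongr)
    _ = 2 / c * ‖B - A‖ := by field_simp

end PosSemidef

end Matrix

/-- Let `A`, `B` be positive semidefinite `p × p` real symmetric
matrices, `λ > 0`, and `w ∈ ℝ^p`.  Then
`‖(λI + B)⁻²(2λI + B) B w − (λI + A)⁻²(2λI + A) A w‖ ≤ (4‖w‖/λ) ‖B − A‖`, where matrices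
carry the operator (spectral) norm and vectors the Euclidean norm. -/
theorem bias_corrected_resolvent_difference_bound
    {p : ℕ} (A B : Matrix (Fin p) (Fin p) ℝ)
    (hA : A.PosSemidef) (hB : B.PosSemidef)
    (lam : ℝ) (hlam : 0 < lam) (w : EuclideanSpace ℝ (Fin p)) :
    ‖Matrix.toEuclideanCLM (𝕜 := ℝ) (((lam • 1 + B)⁻¹) ^ 2 * ((2 * lam) • 1 + B) * B) w -
        Matrix.toEuclideanCLM (𝕜 := ℝ) (((lam • 1 + A)⁻¹) ^ 2 * ((2 * lam) • 1 + A) * A) w‖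
      ≤ 4 * ‖w‖ / lam * ‖B - A‖ := by
  rw [← sub_apply, ← map_sub]
  refine (ContinuousLinearMap.le_opNorm _ w).trans ?_
  rw [Matrix.l2_opNorm_toEuclideanCLM]
  calc _ ≤ 2 / lam * ‖B - A‖ * ‖w‖ := by
        gcongr
        exact hA.norm_sq_inv_mul_two_smul_add_mul_sub_le hB hlam
    _ = 2 * ‖w‖ / lam * ‖B - A‖ := by ring
    _ ≤ 4 * ‖w‖ / lam * ‖B - A‖ := by gcongr; norm_num
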